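/- Let α_1, α_2 ∈ (1,2), let n_1, n_2 ≥ 1 be integers, let c_x, c_y > 0, set N = n_1 n_2, let τ_1(A) = c_x (I_{n_2} ⊗ τ(G_{n_1}^{(α_1)})) + c_y (τ(G_{n_2}^{(α_2)}) ⊗ I_{n_1}), and let D be an N×N diagonal matrix with nonnegative diagonal entries. Then the preconditioner P = I_N - τ_1(A) + D is symmetric positive definite, and in particular P is invertible. -/

import Mathlib

/-- Grünwald–Letnikov coefficients: `g α 0 = 1`,
`g α l = (1 - (α+1)/l) * g α (l-1)` for `l ≥ 1`. -/
noncomputable def g (α : ℝ) : ℕ → ℝ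
  | 0 => 1
  | l + 1 => (1 - (α + 1) / ((l : ℝ) + 1)) * g α l


/-- First column (Toeplitz symbol) of `G_n^{(α)}`: entry at distance `d` is
`2 g₁` if `d = 0`, `g₀ + g₂` if `d = 1`, and `g_{d+1}` if `d ≥ 2`. -/
noncomputable def gSymb (α : ℝ) : ℕ → ℝ
  | 0 => 2 * g α 1
  | 1 => g α 0 + g α 2
  | d + 2 => g α (d + 3)

/-- The symmetric Toeplitz matrix `G_n^{(α)}`. -/
noncomputable def Gmat (α : ℝ) (n : ℕ) : Matrix (Fin n) (Fin n) ℝ :=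
  Matrix.of fun i j => gSymb α (((i : ℤ) - (j : ℤ)).natAbs)

/-- The symmetric Toeplitz matrix `T_n = [t_{|i-j|}]` generated by `t`. -/
noncomputable def toeplitzMat (t : ℕ → ℝ) (n : ℕ) : Matrix (Fin n) (Fin n) ℝ :=
  Matrix.of fun i j => t (((i : ℤ) - (j : ℤ)).natAbs)

/-- The Hankel correction matrix `H_n` (1-based indices `i, j`):
`[H_n]_{ij} = t_{i+j}` for `2 ≤ i+j ≤ n-1`, `0` for `n ≤ i+j ≤ n+2`,
and `t_{2n+2-(i+j)}` for `n+3 ≤ i+j ≤ 2n`. -/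
noncomputable def hankelMat (t : ℕ → ℝ) (n : ℕ) : Matrix (Fin n) (Fin n) ℝ :=
  Matrix.of fun i j =>
    let s := (i : ℕ) + (j : ℕ) + 2
    if s ≤ n - 1 then t s else if s ≤ n + 2 then 0 else t (2 * n + 2 - s)

/-- The τ matrix `τ(T_n) = T_n - H_n`. -/
noncomputable def tauMat (t : ℕ → ℝ) (n : ℕ) : Matrix (Fin n) (Fin n) ℝ :=
  toeplitzMat t n - hankelMat t n

open Matrix Kronecker

/-- `τ₁(A) = c_x (I_{n₂} ⊗ τ(G_{n₁}^{(α₁)})) + c_y (τ(G_{n₂}^{(α₂)}) ⊗ I_{n₁})`. -/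
noncomputable def tau1A (α₁ α₂ : ℝ) (n₁ n₂ : ℕ) (cx cy : ℝ) :
    Matrix (Fin n₂ × Fin n₁) (Fin n₂ × Fin n₁) ℝ :=
  cx • ((1 : Matrix (Fin n₂) (Fin n₂) ℝ) ⊗ₖ tauMat (gSymb α₁) n₁) +
    cy • (tauMat (gSymb α₂) n₂ ⊗ₖ (1 : Matrix (Fin n₁) (Fin n₁) ℝ))

/-!
Expanding the symbol, `τ(T) = ∑ t_d τ(e_d)` with `τ(e_0) = I`. Every row and column of `τ(e_d)`
has absolute sum at most `2` (each of the two diagonals `j = i ± d` meets at most one reflected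
Hankel entry), so by the Schur test `xᵀ τ(e_d) x ≤ 2 ‖x‖²`. For `G^{(α)}` the symbols `t_d`,
`d ≥ 1`, are nonnegative, hence `xᵀ τ(G) x ≤ (t_0 + 2 ∑_{d ≥ 1} t_d) ‖x‖²`, and this factor is
`2 ∑_{l ≤ n+1} g_l^{(α)} = 2 g_{n+1}^{(α-1)} < 0`. So `-τ(G)` is positive semidefinite, hence so
is `-τ₁(A)` as a sum of Kronecker products with identities, and `P = I + (-τ₁(A) + D)` is
positive definite.
-/

open Finset

theorem g_one (α : ℝ) : g α 1 = -α := by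
  simp [g]

theorem g_succ_eq_mul_g_sub_one (α : ℝ) (n : ℕ) :
    g α (n + 1) = -(α / (n + 1)) * g (α - 1) n := by
  induction n with
  | zero => simp [g]
  | succ n ih =>
    rw [g, ih, g]
    push_cast
    field_simp
    ring

theorem sum_range_g (α : ℝ) (n : ℕ) : ∑ l ∈ range (n + 1), g α l = g (α - 1) n := by
  induction n with
  | zero => simp [g]
  | succ n ih =>
    rw [sum_range_succ, ih, g_succ_eq_mul_g_sub_one, g]
    ring

theorem g_succ_neg {β : ℝ} (h0 : 0 < β) (h1 : β < 1) (n : ℕ) : g β (n + 1) < 0 := by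
  induction n with
  | zero => simpa [g_one] using h0
  | succ n ih =>
    have : (β + 1) / ((n + 1 : ℕ) + 1 : ℝ) < 1 := by
      rw [div_lt_one (by positivity)]; push_cast; linarith [(n.cast_nonneg : (0:ℝ) ≤ n)]
    exact mul_neg_of_pos_of_neg (by linarith) ih

theorem g_add_two_pos {α : ℝ} (h1 : 1 < α) (h2 : α < 2) (n : ℕ) : 0 < g α (n + 2) := by
  induction n with
  | zero => simp only [g]; norm_num; nlinarith
  | succ n ih =>
    have : (α + 1) / ((n + 2 : ℕ) + 1 : ℝ) < 1 := by
      rw [div_lt_one (by positivity)]; push_cast; linarith [(n.cast_nonneg : (0:ℝ) ≤ n)]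
    exact mul_pos (by linarith) ih

theorem gSymb_succ_nonneg {α : ℝ} (h1 : 1 < α) (h2 : α < 2) (d : ℕ) : 0 ≤ gSymb α (d + 1) := by
  cases d with
  | zero =>
    show 0 ≤ g α 0 + g α 2
    linarith [g_add_two_pos h1 h2 0, show g α 0 = 1 from rfl]
  | succ d => exact (g_add_two_pos h1 h2 (d + 1)).le

theorem gSymb_zero_add_two_mul_sum (α : ℝ) (n : ℕ) :
    gSymb α 0 + 2 * ∑ d ∈ range (n + 1), gSymb α (d + 1) = 2 * ∑ l ∈ range (n + 3), g α l := by
  induction n with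
  | zero => simp [sum_range_succ, gSymb]; ring
  | succ n ih =>
    rw [sum_range_succ, sum_range_succ _ (n + 3), mul_add, mul_add, ← ih,
      show gSymb α (n + 1 + 1) = g α (n + 3) from rfl]
    ring

theorem gSymb_zero_add_two_mul_sum_nonpos {α : ℝ} (h1 : 1 < α) (h2 : α < 2) (n : ℕ) :
    gSymb α 0 + 2 * ∑ d ∈ range n, gSymb α (d + 1) ≤ 0 := by
  cases n with
  | zero => simp [gSymb, g_one]; linarith
  | succ n =>
    rw [gSymb_zero_add_two_mul_sum, sum_range_g]
    linarith [g_succ_neg (by linarith : 0 < α - 1) (by linarith) (n + 1)]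

theorem dotProduct_mulVec_le_of_sum_abs_le {ι : Type*} [Fintype ι] (M : Matrix ι ι ℝ) (c : ℝ)
    (hrow : ∀ i, ∑ j, |M i j| ≤ c) (hcol : ∀ j, ∑ i, |M i j| ≤ c) (x : ι → ℝ) :
    x ⬝ᵥ (M *ᵥ x) ≤ c * (x ⬝ᵥ x) := by
  have amgm (i j : ι) : x i * (M i j * x j) ≤ |M i j| * x i ^ 2 / 2 + |M i j| * x j ^ 2 / 2 := by
    have := two_mul_le_add_sq |x i| |x j|
    rw [sq_abs, sq_abs] at this
    calc x i * (M i j * x j) ≤ |M i j| * (|x i| * |x j|) := by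
          rw [mul_left_comm, ← abs_mul, ← abs_mul]; exact le_abs_self _
      _ ≤ _ := by nlinarith [abs_nonneg (M i j)]
  calc x ⬝ᵥ (M *ᵥ x) = ∑ i, ∑ j, x i * (M i j * x j) := by
        simp only [dotProduct, mulVec, mul_sum]
    _ ≤ ∑ i, ∑ j, (|M i j| * x i ^ 2 / 2 + |M i j| * x j ^ 2 / 2) := by
        gcongr with i _ j _; exact amgm i j
    _ = (∑ i, (∑ j, |M i j|) * x i ^ 2 + ∑ j, (∑ i, |M i j|) * x j ^ 2) / 2 := by
        simp only [sum_add_distrib, sum_mul, ← sum_div]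
        rw [sum_comm (f := fun i j => |M i j| * x j ^ 2)]
        ring
    _ ≤ (∑ i, c * x i ^ 2 + ∑ j, c * x j ^ 2) / 2 := by
        gcongr with i _ j _
        exacts [hrow i, hcol j]
    _ = c * (x ⬝ᵥ x) := by
        simp only [dotProduct, ← mul_sum, sq]
        ring

theorem tauMat_apply_comm (t : ℕ → ℝ) (n : ℕ) (i j : Fin n) :
    tauMat t n j i = tauMat t n i j := by
  simp only [tauMat, toeplitzMat, hankelMat, Matrix.sub_apply, of_apply]
  rw [show ((j : ℤ) - i).natAbs = ((i : ℤ) - j).natAbs by omega, add_comm (j : ℕ)]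

theorem tauMat_isHermitian (t : ℕ → ℝ) (n : ℕ) : (tauMat t n).IsHermitian :=
  IsHermitian.ext fun i j => by simp [tauMat_apply_comm]

theorem tauMat_single_zero (n : ℕ) : tauMat (Pi.single 0 1) n = 1 := by
  ext i j
  simp only [tauMat, toeplitzMat, hankelMat, Matrix.sub_apply, of_apply, Pi.single_apply,
    one_apply, Fin.ext_iff]
  split_ifs <;> norm_num <;> omega

theorem tauMat_eq_sum (t : ℕ → ℝ) (n : ℕ) :
    tauMat t n = ∑ d ∈ range (n + 1), t d • tauMat (Pi.single d 1) n := by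
  ext i j
  simp only [tauMat, toeplitzMat, hankelMat, Matrix.sub_apply, of_apply, Matrix.sum_apply,
    Matrix.smul_apply, smul_eq_mul, Pi.single_apply, mul_sub, sum_sub_distrib]
  have hi := i.2
  have hj := j.2
  split_ifs with h₁ h₂ <;>
    simp only [mul_ite, mul_one, mul_zero, sum_ite_eq, mem_range, sum_const_zero] <;>
    split_ifs <;> first | rfl | omega

theorem abs_tauMat_single_le (d n : ℕ) (i j : Fin n) :
    |tauMat (Pi.single d 1) n i j| ≤
      (if (j : ℕ) = i + d ∨ (i : ℕ) + j + d = 2 * n then 1 else 0) +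
        (if (i : ℕ) = j + d ∨ (i : ℕ) + j + 2 = d then 1 else 0) := by
  simp only [tauMat, toeplitzMat, hankelMat, Matrix.sub_apply, of_apply, Pi.single_apply]
  split_ifs <;> norm_num <;> omega

theorem card_filter_fin_le_one {n : ℕ} {p : ℕ → Prop} [DecidablePred p]
    (hp : ∀ a b, a < n → b < n → p a → p b → a = b) : #{j : Fin n | p j} ≤ 1 :=
  card_le_one.2 fun a ha b hb =>
    Fin.ext (hp a b a.2 b.2 (mem_filter.1 ha).2 (mem_filter.1 hb).2)

theorem sum_abs_tauMat_single_le (d n : ℕ) (i : Fin n) :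
    ∑ j, |tauMat (Pi.single d 1) n i j| ≤ 2 := by
  refine (sum_le_sum fun j _ => abs_tauMat_single_le d n i j).trans ?_
  have h₁ : #{j : Fin n | (j : ℕ) = i + d ∨ (i : ℕ) + j + d = 2 * n} ≤ 1 :=
    card_filter_fin_le_one (p := fun j => j = i + d ∨ i + j + d = 2 * n)
      fun a b ha hb h h' => by omega
  have h₂ : #{j : Fin n | (i : ℕ) = j + d ∨ (i : ℕ) + j + 2 = d} ≤ 1 :=
    card_filter_fin_le_one (p := fun j => i = j + d ∨ i + j + 2 = d)
      fun a b ha hb h h' => by omega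
  rw [sum_add_distrib, sum_boole, sum_boole]
  norm_cast
  omega

theorem dotProduct_tauMat_single_mulVec_le (d n : ℕ) (x : Fin n → ℝ) :
    x ⬝ᵥ (tauMat (Pi.single d 1) n *ᵥ x) ≤ 2 * (x ⬝ᵥ x) :=
  dotProduct_mulVec_le_of_sum_abs_le _ 2 (sum_abs_tauMat_single_le d n)
    (fun j => by simpa only [tauMat_apply_comm] using sum_abs_tauMat_single_le d n j) x

theorem dotProduct_tauMat_mulVec_le (t : ℕ → ℝ) (ht : ∀ d, 0 ≤ t (d + 1)) (n : ℕ)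
    (x : Fin n → ℝ) :
    x ⬝ᵥ (tauMat t n *ᵥ x) ≤ (t 0 + 2 * ∑ d ∈ range n, t (d + 1)) * (x ⬝ᵥ x) := by
  rw [tauMat_eq_sum, sum_mulVec, dotProduct_sum, sum_range_succ', tauMat_single_zero]
  simp only [smul_mulVec, dotProduct_smul, smul_eq_mul, one_mulVec]
  have := sum_le_sum fun d (_ : d ∈ range n) =>
    mul_le_mul_of_nonneg_left (dotProduct_tauMat_single_mulVec_le (d + 1) n x) (ht d)
  rw [← sum_mul] at this
  linarith

theorem neg_tauMat_gSymb_posSemidef {α : ℝ} (h1 : 1 < α) (h2 : α < 2) (n : ℕ) :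
    (-tauMat (gSymb α) n).PosSemidef := by
  refine .of_dotProduct_mulVec_nonneg (tauMat_isHermitian _ n).neg fun x => ?_
  have := mul_nonpos_of_nonpos_of_nonneg (gSymb_zero_add_two_mul_sum_nonpos h1 h2 n)
    (dotProduct_star_self_nonneg x)
  rw [star_trivial] at this ⊢
  rw [neg_mulVec, dotProduct_neg, neg_nonneg]
  exact (dotProduct_tauMat_mulVec_le _ (gSymb_succ_nonneg h1 h2) n x).trans this

theorem neg_tau1A_posSemidef {α₁ α₂ : ℝ} (hα₁ : 1 < α₁ ∧ α₁ < 2) (hα₂ : 1 < α₂ ∧ α₂ < 2)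
    (n₁ n₂ : ℕ) {cx cy : ℝ} (hcx : 0 ≤ cx) (hcy : 0 ≤ cy) :
    (-tau1A α₁ α₂ n₁ n₂ cx cy).PosSemidef := by
  have h₁ := (PosSemidef.one (n := Fin n₂) (R := ℝ)).kronecker
    (neg_tauMat_gSymb_posSemidef hα₁.1 hα₁.2 n₁)
  have h₂ := (neg_tauMat_gSymb_posSemidef hα₂.1 hα₂.2 n₂).kronecker
    (PosSemidef.one (n := Fin n₁) (R := ℝ))
  have h : -tau1A α₁ α₂ n₁ n₂ cx cy = cx • (1 ⊗ₖ (-tauMat (gSymb α₁) n₁)) +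
      cy • ((-tauMat (gSymb α₂) n₂) ⊗ₖ 1) := by
    ext ⟨a, b⟩ ⟨c, e⟩
    simp [tau1A]
    ring
  rw [h]
  exact (h₁.smul hcx).add (h₂.smul hcy)

theorem stmt14_general (α₁ α₂ : ℝ) (hα₁ : 1 < α₁ ∧ α₁ < 2) (hα₂ : 1 < α₂ ∧ α₂ < 2)
    (n₁ n₂ : ℕ) (cx cy : ℝ) (hcx : 0 < cx) (hcy : 0 < cy)
    (d : Fin n₂ × Fin n₁ → ℝ) (hd : ∀ i, 0 ≤ d i)
    (P : Matrix (Fin n₂ × Fin n₁) (Fin n₂ × Fin n₁) ℝ)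
    (hP : P = 1 - tau1A α₁ α₂ n₁ n₂ cx cy + Matrix.diagonal d) :
    P.PosDef ∧ IsUnit P := by
  have hPD : P.PosDef := by
    rw [hP, sub_eq_add_neg, add_assoc]
    exact PosDef.one.add_posSemidef
      ((neg_tau1A_posSemidef hα₁ hα₂ n₁ n₂ hcx.le hcy.le).add (.diagonal hd))
  exact ⟨hPD, hPD.isUnit⟩

theorem stmt14 (α₁ α₂ : ℝ) (hα₁ : 1 < α₁ ∧ α₁ < 2) (hα₂ : 1 < α₂ ∧ α₂ < 2)
    (n₁ n₂ : ℕ) (hn₁ : 1 ≤ n₁) (hn₂ : 1 ≤ n₂) (cx cy : ℝ) (hcx : 0 < cx) (hcy : 0 < cy)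
    (d : Fin n₂ × Fin n₁ → ℝ) (hd : ∀ i, 0 ≤ d i)
    (P : Matrix (Fin n₂ × Fin n₁) (Fin n₂ × Fin n₁) ℝ)
    (hP : P = 1 - tau1A α₁ α₂ n₁ n₂ cx cy + Matrix.diagonal d) :
    P.PosDef ∧ IsUnit P :=
  stmt14_general α₁ α₂ hα₁ hα₂ n₁ n₂ cx cy hcx hcy d hd P hP
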